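/- Let (A, μ, ∂) be a unital GDQ ring with X ∈ A satisfying ∂X = 1⊗1, and let N = Ker ∂. Define linear maps ψ_k : N^{⊗(k+1)} → A by ψ_k(n₀⊗…⊗n_k) = n₀Xn₁X⋯Xn_k, and iterated comultiplications ∂^{(k)} = (∂⊗id^{⊗(k−1)})∘∂^{(k−1)} with ∂^{(1)} = ∂. Then ∂^{(k)}∘ψ_k = id on N^{⊗(k+1)} and ∂^{(k)}∘ψ_l = 0 for l < k; consequently each ψ_k is injective and the ranges of the ψ_k, k ≥ 0, are linearly independent, so the canonical homomorphism from the algebra N⟨X⟩ of noncommutative polynomials over N into A is injective. -/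

import Mathlib

/- STATEMENT 8: (Proposition 4.5) In a unital GDQ ring (A, μ, ∂) with ∂X = 1⊗1 and
N = Ker ∂, the maps ψ_k(n₀⊗…⊗n_k) = n₀Xn₁X⋯Xn_k satisfy ∂^{(k)} ∘ ψ_k = id on
N^{⊗(k+1)} and ∂^{(k)} ∘ ψ_l = 0 for l < k; consequently the ψ_k are injective and
their ranges are linearly independent, so the canonical homomorphism N⟨X⟩ → A is
injective. -/

open scoped TensorProduct

noncomputable section

variable {A : Type*} [Ring A] [Algebra ℂ A]

/-- The splitting `A ⊗ A^{⊗k} ≃ A^{⊗(k+1)}` (peeling off the first tensor factor). -/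
def stepE (A : Type*) [Ring A] [Algebra ℂ A] (k : ℕ) :
    (A ⊗[ℂ] (⨂[ℂ] _ : Fin k, A)) ≃ₗ[ℂ] (⨂[ℂ] _ : Fin (k + 1), A) :=
  (TensorProduct.congr
      (PiTensorProduct.subsingletonEquiv (0 : Fin 1) : (⨂[ℂ] _ : Fin 1, A) ≃ₗ[ℂ] A).symm
      (LinearEquiv.refl ℂ _)).trans
    ((PiTensorProduct.tmulEquiv ℂ A).trans
      (PiTensorProduct.reindex ℂ (fun _ : Fin 1 ⊕ Fin k => A)
        (finSumFinEquiv.trans (finCongr (Nat.add_comm 1 k)))))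

/-- The iterated comultiplication `∂^{(k)} : A → A^{⊗(k+1)}`,
`∂^{(k)} = (∂ ⊗ id^{⊗(k−1)}) ∘ ∂^{(k−1)}`, `∂^{(0)} = id`, `∂^{(1)} = ∂`. -/
def Dk (D : A →ₗ[ℂ] A ⊗[ℂ] A) : (k : ℕ) → (A →ₗ[ℂ] ⨂[ℂ] _ : Fin (k + 1), A)
  | 0 => ((PiTensorProduct.subsingletonEquiv (0 : Fin 1) :
            (⨂[ℂ] _ : Fin 1, A) ≃ₗ[ℂ] A)).symm.toLinearMap
  | (k + 1) =>
      (stepE A (k + 1)).toLinearMap ∘ₗ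
        (LinearMap.lTensor A (stepE A k).toLinearMap) ∘ₗ
          (TensorProduct.assoc ℂ A A (⨂[ℂ] _ : Fin k, A)).toLinearMap ∘ₗ
            (LinearMap.rTensor (⨂[ℂ] _ : Fin k, A) D) ∘ₗ
              (stepE A k).symm.toLinearMap ∘ₗ (Dk D k)

/-- `ψ_k(n₀, …, n_k) = n₀ X n₁ X ⋯ X n_k`. -/
def psi (X : A) (k : ℕ) (n : Fin (k + 1) → A) : A :=
  n 0 * (List.ofFn fun i : Fin k => X * n i.succ).prod

set_option maxHeartbeats 1000000
/-!
Since `∂` kills `N` and `∂X = 1 ⊗ 1`, the Leibniz rule gives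
`∂(n₀ X w) = n₀ ⊗ w + (n₀X ⊗ 1) ∂w`. Coassociativity lets `∂^{(k+1)}` be computed as
`(id ⊗ ∂^{(k)}) ∘ ∂`, so by induction on `k` the map `∂^{(k)}` kills `ψ_l` for `l < k`
and peels `n₀ X n₁ ⋯ X n_k` back into `n₀ ⊗ ⋯ ⊗ n_k`. Composing `∂^{(k)}` with the
multiplication map `a₀ ⊗ ⋯ ⊗ a_k ↦ a₀ X a₁ ⋯ X a_k` is therefore the identity on the range of
`ψ_k`, and this triangularity makes the ranges linearly independent.
-/

theorem eq_zero_of_sum_range_eq_zero_of_triangular {M : Type*} [AddCommMonoid M]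
    {P : ℕ → Type*} [∀ k, AddCommMonoid (P k)] (f : ∀ k, M →+ P k) (V : ℕ → Set M)
    (hinj : ∀ k, ∀ x ∈ V k, f k x = 0 → x = 0)
    (hvan : ∀ k l, l < k → ∀ x ∈ V l, f k x = 0)
    (x : ℕ → M) (hx : ∀ l, x l ∈ V l) (m : ℕ)
    (hsum : ∑ l ∈ Finset.range (m + 1), x l = 0) : ∀ l ≤ m, x l = 0 := by
  induction m with
  | zero =>
    intro l hl
    obtain rfl : l = 0 := by omega
    simpa using hsum
  | succ m ih =>
    have htop : x (m + 1) = 0 := by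
      refine hinj _ _ (hx _) ?_
      have hfsum := congrArg (f (m + 1)) hsum
      rwa [map_sum, map_zero, Finset.sum_range_succ, Finset.sum_eq_zero, zero_add] at hfsum
      intro j hj
      exact hvan _ _ (Finset.mem_range.mp hj) _ (hx j)
    intro l hl
    obtain hl | rfl := Nat.le_succ_iff.mp hl
    · rw [Finset.sum_range_succ, htop, add_zero] at hsum
      exact ih hsum l hl
    · exact htop

theorem Algebra.TensorProduct.tmul_one_mul_eq_rTensor {R B C : Type*} [CommSemiring R]
    [Semiring B] [Algebra R B] [Semiring C] [Algebra R C] (b : B) (t : B ⊗[R] C) :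
    (b ⊗ₜ[R] (1 : C)) * t = LinearMap.rTensor C (LinearMap.mulLeft R b) t := by
  induction t with
  | zero => simp
  | tmul x y => simp [Algebra.TensorProduct.tmul_mul_tmul]
  | add x y hx hy => rw [mul_add, map_add, hx, hy]

theorem LinearMap.rTensor_lTensor_comm_apply {R M N P Q : Type*} [CommSemiring R]
    [AddCommMonoid M] [AddCommMonoid N] [AddCommMonoid P] [AddCommMonoid Q] [Module R M]
    [Module R N] [Module R P] [Module R Q] (f : M →ₗ[R] P) (g : N →ₗ[R] Q) (t : M ⊗[R] N) :
    rTensor Q f (lTensor M g t) = lTensor P g (rTensor N f t) := by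
  rw [← comp_apply, rTensor_comp_lTensor, ← lTensor_comp_rTensor, comp_apply]

lemma stepE_tmul_tprod (k : ℕ) (a : A) (f : Fin k → A) :
    stepE A k (a ⊗ₜ[ℂ] PiTensorProduct.tprod ℂ f) = PiTensorProduct.tprod ℂ (Fin.cons a f) := by
  have hsingleton : ((PiTensorProduct.subsingletonEquiv (0 : Fin 1) :
      (⨂[ℂ] _ : Fin 1, A) ≃ₗ[ℂ] A).symm a) = PiTensorProduct.tprod ℂ (fun _ : Fin 1 => a) :=
    PiTensorProduct.subsingletonEquiv_symm_apply' (0 : Fin 1) a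
  simp only [stepE, LinearEquiv.trans_apply, TensorProduct.congr_tmul, hsingleton,
    LinearEquiv.refl_apply, PiTensorProduct.tmulEquiv_apply, PiTensorProduct.reindex_tprod]
  congr 1
  funext i
  refine Fin.cases ?_ (fun j => ?_) i
  · have : Fin.cast (Nat.add_comm 1 k).symm (0 : Fin (k + 1)) = Fin.castAdd k 0 := by ext; simp
    simp [this]
  · have : Fin.cast (Nat.add_comm 1 k).symm j.succ = Fin.natAdd 1 j := by
      ext; simp [Nat.add_comm]
    simp [this]

lemma stepE_zero_tmul_tprod (a : A) (f : Fin 0 → A) :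
    stepE A 0 (a ⊗ₜ[ℂ] PiTensorProduct.tprod ℂ f) = PiTensorProduct.tprod ℂ (fun _ => a) := by
  rw [stepE_tmul_tprod]
  congr 1
  funext i
  exact Fin.cases rfl (fun j => j.elim0) i

lemma Dk_zero_apply (D : A →ₗ[ℂ] A ⊗[ℂ] A) (a : A) :
    Dk D 0 a = PiTensorProduct.tprod ℂ (fun _ : Fin 1 => a) :=
  PiTensorProduct.subsingletonEquiv_symm_apply' (0 : Fin 1) a

lemma psi_zero {R : Type*} [Ring R] (X : R) (n : Fin 1 → R) : psi X 0 n = n 0 := by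
  simp [psi]

lemma psi_succ {R : Type*} [Ring R] (X : R) (k : ℕ) (n : Fin (k + 2) → R) :
    psi X (k + 1) n = n 0 * (X * psi X k (Fin.tail n)) := by
  simp [psi, Fin.tail, List.ofFn_succ, mul_assoc]

section

variable (D : A →ₗ[ℂ] A ⊗[ℂ] A) (X : A)

def IsTensorDerivation : Prop :=
  ∀ a b : A, D (a * b) = (a ⊗ₜ[ℂ] (1 : A)) * D b + D a * ((1 : A) ⊗ₜ[ℂ] b)

def IsCoassociative : Prop :=
  ∀ a : A, TensorProduct.assoc ℂ A A A (LinearMap.rTensor A D (D a)) = LinearMap.lTensor A D (D a)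

lemma Dk_succ_eq (hco : IsCoassociative D) (k : ℕ) :
    Dk D (k + 1) = (stepE A (k + 1)).toLinearMap ∘ₗ LinearMap.lTensor A (Dk D k) ∘ₗ D := by
  induction k with
  | zero =>
    refine LinearMap.ext fun a => ?_
    have hsplit : (stepE A 0).symm (Dk D 0 a) =
        a ⊗ₜ[ℂ] PiTensorProduct.tprod ℂ (fun i : Fin 0 => i.elim0) := by
      rw [LinearEquiv.symm_apply_eq, stepE_zero_tmul_tprod, Dk_zero_apply]
    simp only [Dk.eq_2, LinearMap.comp_apply, LinearEquiv.coe_coe]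
    rw [hsplit, LinearMap.rTensor_tmul]
    congr 1
    induction D a with
    | zero => simp only [TensorProduct.zero_tmul, map_zero]
    | tmul x y =>
      simp [TensorProduct.assoc_tmul, stepE_zero_tmul_tprod, Dk_zero_apply]
    | add x y hx hy => simp only [TensorProduct.add_tmul, map_add, hx, hy]
  | succ k ih =>
    refine LinearMap.ext fun a => ?_
    rw [Dk.eq_2, ih]
    simp only [LinearMap.comp_apply, LinearEquiv.coe_coe, LinearEquiv.symm_apply_apply,
      LinearMap.rTensor_lTensor_comm_apply,
      LinearMap.lTensor_tensor, hco a, LinearEquiv.apply_symm_apply, LinearMap.lTensor_comp]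

lemma Dk_succ_apply (hco : IsCoassociative D) (k : ℕ) (a : A) :
    Dk D (k + 1) a = stepE A (k + 1) (LinearMap.lTensor A (Dk D k) (D a)) := by
  rw [Dk_succ_eq D hco]
  rfl

lemma D_psi_succ (hder : IsTensorDerivation D) (hX : D X = (1 : A) ⊗ₜ[ℂ] (1 : A)) (l : ℕ)
    (n : Fin (l + 2) → A) (h0 : D (n 0) = 0) :
    D (psi X (l + 1) n) = n 0 ⊗ₜ[ℂ] psi X l (Fin.tail n) +
      LinearMap.rTensor A (LinearMap.mulLeft ℂ (n 0 * X)) (D (psi X l (Fin.tail n))) := by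
  rw [psi_succ, hder (n 0), h0, zero_mul, add_zero, hder X, hX, mul_add, ← mul_assoc,
    Algebra.TensorProduct.tmul_mul_tmul, mul_one, Algebra.TensorProduct.tmul_one_mul_eq_rTensor,
    Algebra.TensorProduct.tmul_mul_tmul, Algebra.TensorProduct.tmul_mul_tmul, mul_one, mul_one,
    one_mul, one_mul, add_comm]

lemma lTensor_D_psi_succ (hder : IsTensorDerivation D) (hX : D X = (1 : A) ⊗ₜ[ℂ] (1 : A))
    {M : Type*} [AddCommGroup M] [Module ℂ M] (f : A →ₗ[ℂ] M) (l : ℕ) (n : Fin (l + 2) → A)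
    (h0 : D (n 0) = 0) :
    LinearMap.lTensor A f (D (psi X (l + 1) n)) = n 0 ⊗ₜ[ℂ] f (psi X l (Fin.tail n)) +
      LinearMap.rTensor M (LinearMap.mulLeft ℂ (n 0 * X))
        (LinearMap.lTensor A f (D (psi X l (Fin.tail n)))) := by
  rw [D_psi_succ D X hder hX l n h0, map_add, LinearMap.lTensor_tmul,
    LinearMap.rTensor_lTensor_comm_apply]

lemma lTensor_D_psi_eq_zero (hder : IsTensorDerivation D) (hX : D X = (1 : A) ⊗ₜ[ℂ] (1 : A))
    {M : Type*} [AddCommGroup M] [Module ℂ M] (f : A →ₗ[ℂ] M) (l : ℕ)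
    (hf : ∀ j < l, ∀ m : Fin (j + 1) → A, (∀ i, m i ∈ LinearMap.ker D) → f (psi X j m) = 0)
    (n : Fin (l + 1) → A) (hn : ∀ i, n i ∈ LinearMap.ker D) :
    LinearMap.lTensor A f (D (psi X l n)) = 0 := by
  induction l with
  | zero => rw [psi_zero, hn 0, map_zero]
  | succ l ih =>
    rw [lTensor_D_psi_succ D X hder hX f l n (hn 0),
      hf l l.lt_succ_self (Fin.tail n) (fun i => hn i.succ),
      ih (fun j hj => hf j (by omega)) (Fin.tail n) (fun i => hn i.succ),
      TensorProduct.tmul_zero, map_zero, add_zero]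

theorem Dk_psi_of_lt (hder : IsTensorDerivation D) (hco : IsCoassociative D)
    (hX : D X = (1 : A) ⊗ₜ[ℂ] (1 : A)) (k l : ℕ) (hl : l < k) (n : Fin (l + 1) → A)
    (hn : ∀ i, n i ∈ LinearMap.ker D) :
    Dk D k (psi X l n) = 0 := by
  induction k generalizing l with
  | zero => omega
  | succ k ih =>
    rw [Dk_succ_apply D hco, lTensor_D_psi_eq_zero D X hder hX _ l
      (fun j hj => ih j (by omega)) n hn, map_zero]

theorem Dk_psi_self (hder : IsTensorDerivation D) (hco : IsCoassociative D)
    (hX : D X = (1 : A) ⊗ₜ[ℂ] (1 : A)) (k : ℕ) (n : Fin (k + 1) → A)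
    (hn : ∀ i, n i ∈ LinearMap.ker D) :
    Dk D k (psi X k n) = PiTensorProduct.tprod ℂ n := by
  induction k with
  | zero =>
    rw [psi_zero, Dk_zero_apply]
    congr 1
    funext i
    rw [Subsingleton.elim i 0]
  | succ k ih =>
    rw [Dk_succ_apply D hco, lTensor_D_psi_succ D X hder hX _ k n (hn 0),
      ih (Fin.tail n) (fun i => hn i.succ),
      lTensor_D_psi_eq_zero D X hder hX _ k (fun j hj => Dk_psi_of_lt D X hder hco hX k j hj)
        (Fin.tail n) (fun i => hn i.succ),
      map_zero, add_zero, stepE_tmul_tprod, Fin.cons_self_tail]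

-- `a₀ ⊗ ⋯ ⊗ a_k ↦ a₀ X a₁ ⋯ X a_k`: every factor but the first is premultiplied by `X`.
def psiLift (k : ℕ) : (⨂[ℂ] _ : Fin (k + 1), A) →ₗ[ℂ] A :=
  PiTensorProduct.lift ((MultilinearMap.mkPiAlgebraFin ℂ (k + 1) A).compLinearMap
    (fun i => LinearMap.mulLeft ℂ ((Fin.cons (1 : A) (fun _ => X) : Fin (k + 1) → A) i)))

lemma psiLift_tprod (k : ℕ) (n : Fin (k + 1) → A) :
    psiLift X k (PiTensorProduct.tprod ℂ n) = psi X k n := by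
  simp [psiLift, psi, List.ofFn_succ]

def psiSpan (l : ℕ) : Submodule ℂ A :=
  Submodule.span ℂ {a : A | ∃ n : Fin (l + 1) → A, (∀ i, n i ∈ LinearMap.ker D) ∧ a = psi X l n}

lemma Dk_eq_zero_of_mem_psiSpan (hder : IsTensorDerivation D) (hco : IsCoassociative D)
    (hX : D X = (1 : A) ⊗ₜ[ℂ] (1 : A)) {k l : ℕ} (hl : l < k) {x : A}
    (hx : x ∈ psiSpan D X l) : Dk D k x = 0 := by
  refine Submodule.span_le (p := LinearMap.ker (Dk D k)) |>.mpr ?_ hx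
  rintro _ ⟨n, hn, rfl⟩
  exact Dk_psi_of_lt D X hder hco hX k l hl n hn

lemma psiLift_Dk_of_mem_psiSpan (hder : IsTensorDerivation D) (hco : IsCoassociative D)
    (hX : D X = (1 : A) ⊗ₜ[ℂ] (1 : A)) {k : ℕ} {x : A}
    (hx : x ∈ psiSpan D X k) : psiLift X k (Dk D k x) = x := by
  refine LinearMap.eqOn_span (f := psiLift X k ∘ₗ Dk D k) (g := LinearMap.id) ?_ hx
  rintro _ ⟨n, hn, rfl⟩
  simp [Dk_psi_self D X hder hco hX k n hn, psiLift_tprod]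

end

theorem stmt8 (D : A →ₗ[ℂ] A ⊗[ℂ] A)
    -- ∂ is a derivation
    (hder : ∀ a b : A, D (a * b) =
      (a ⊗ₜ[ℂ] (1 : A)) * D b + D a * ((1 : A) ⊗ₜ[ℂ] b))
    -- ∂ is coassociative
    (hco : ∀ a : A, TensorProduct.assoc ℂ A A A (LinearMap.rTensor A D (D a)) =
      LinearMap.lTensor A D (D a))
    (X : A) (hX : D X = (1 : A) ⊗ₜ[ℂ] (1 : A)) :
    -- ∂^{(k)} ∘ ψ_k = id on N^{⊗(k+1)}
    (∀ (k : ℕ) (n : Fin (k + 1) → A), (∀ i, n i ∈ LinearMap.ker D) →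
      Dk D k (psi X k n) = PiTensorProduct.tprod ℂ n) ∧
    -- ∂^{(k)} ∘ ψ_l = 0 for l < k
    (∀ (k l : ℕ), l < k → ∀ n : Fin (l + 1) → A, (∀ i, n i ∈ LinearMap.ker D) →
      Dk D k (psi X l n) = 0) ∧
    -- the ranges of the ψ_k are linearly independent (hence the canonical
    -- homomorphism ψ : N⟨X⟩ → A is injective)
    (∀ (m : ℕ) (x : ℕ → A),
      (∀ l, x l ∈ Submodule.span ℂ
        {a : A | ∃ n : Fin (l + 1) → A, (∀ i, n i ∈ LinearMap.ker D) ∧ a = psi X l n}) →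
      (∑ l ∈ Finset.range (m + 1), x l) = 0 → ∀ l ≤ m, x l = 0) := by
  refine ⟨Dk_psi_self D X hder hco hX, Dk_psi_of_lt D X hder hco hX, fun m x hx hsum => ?_⟩
  refine eq_zero_of_sum_range_eq_zero_of_triangular (fun k => (Dk D k).toAddMonoidHom)
    (fun l => psiSpan D X l) (fun k y hy h0 => ?_)
    (fun k l hl y hy => Dk_eq_zero_of_mem_psiSpan D X hder hco hX hl hy) x hx m hsum
  rw [← psiLift_Dk_of_mem_psiSpan D X hder hco hX hy]
  exact (congrArg (psiLift X k) h0).trans (map_zero _)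

end
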